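/- Let A, B, D be unital C*-algebras, let T1, T2 : A → B be completely positive maps, and let S : B → D be a completely positive map. Then β(S∘T1, S∘T2) ≤ √‖S‖ · β(T1, T2), where ‖S‖ is the operator norm of S. -/

import Mathlib

noncomputable section

/-- A map between star algebras is *completely positive* if, for every `n`, its
entrywise application to `n × n` matrices maps positive elements (i.e. elements of the form
`star y * y`) to positive elements. -/
def IsCPMap {A B : Type*} [NonUnitalSemiring A] [StarRing A]
    [NonUnitalSemiring B] [StarRing B] (T : A → B) : Prop :=
  ∀ (n : ℕ) (x : Matrix (Fin n) (Fin n) A),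
    (∃ y : Matrix (Fin n) (Fin n) A, x = star y * y) →
      ∃ z : Matrix (Fin n) (Fin n) B, x.map T = star z * z

/-- `That : A → M₂(B)` is a cp extension of the pair `(T₁, T₂)`: it is completely positive
and its diagonal entries are `T₁` and `T₂`. -/
def IsCPExtension {A B : Type*} [CStarAlgebra A] [CStarAlgebra B]
    (T₁ T₂ : A → B) (That : A →ₗ[ℂ] Matrix (Fin 2) (Fin 2) B) : Prop :=
  IsCPMap That ∧ (∀ a : A, That a 0 0 = T₁ a) ∧ (∀ a : A, That a 1 1 = T₂ a)

/-- The Bures distance between two completely positive maps `T₁ T₂ : A → B`: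
`β(T₁,T₂) = √ inf { ‖T₁ 1 + T₂ 1 - T̂₁₂ 1 - T̂₂₁ 1‖ | T̂ a cp extension of (T₁, T₂) }`. -/
noncomputable def buresDist {A B : Type*} [CStarAlgebra A] [CStarAlgebra B]
    (T₁ T₂ : A → B) : ℝ :=
  Real.sqrt (sInf { r : ℝ | ∃ That : A →ₗ[ℂ] Matrix (Fin 2) (Fin 2) B,
    IsCPExtension T₁ T₂ That ∧ r = ‖T₁ 1 + T₂ 1 - That 1 0 1 - That 1 1 0‖ })

/-!
A cp extension `T̂` of `(T₁, T₂)` is pushed forward entrywise by `S` to a cp extension of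
`(S ∘ T₁, S ∘ T₂)`: the amplification of `S` to `M_n(M_2(B)) ≅ M_{2n}(B)` is positive because `S`
is completely positive. The defect `T₁ 1 + T₂ 1 - T̂₁₂ 1 - T̂₂₁ 1` of the new extension is `S`
applied to the defect of `T̂`, so its norm is at most `‖S‖` times the old one. Taking infima (over
a set that is nonempty thanks to the block-diagonal extension) gives `β(S T₁, S T₂)² ≤ ‖S‖ β(T₁, T₂)²`.
-/

open Matrix

def blockRingEquiv (B : Type*) [NonUnitalSemiring B] (n k : ℕ) :
    Matrix (Fin n) (Fin n) (Matrix (Fin k) (Fin k) B) ≃+* Matrix (Fin (n * k)) (Fin (n * k)) B :=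
  (compRingEquiv (Fin n) (Fin k) B).trans (reindexRingEquiv B finProdFinEquiv)

section Algebraic
variable {A B D : Type*} [NonUnitalSemiring B] [NonUnitalSemiring D]

theorem blockRingEquiv_map {n k : ℕ} (S : B → D)
    (M : Matrix (Fin n) (Fin n) (Matrix (Fin k) (Fin k) B)) :
    blockRingEquiv D n k (M.map (·.map S)) = (blockRingEquiv B n k M).map S :=
  rfl

variable [StarRing B] [StarRing D]

theorem blockRingEquiv_star {n k : ℕ} (M : Matrix (Fin n) (Fin n) (Matrix (Fin k) (Fin k) B)) :
    blockRingEquiv B n k (star M) = star (blockRingEquiv B n k M) :=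
  rfl

theorem IsCPMap.matrixMap {S : B → D} (hS : IsCPMap S) (k : ℕ) :
    IsCPMap (fun M : Matrix (Fin k) (Fin k) B => M.map S) := by
  rintro n x ⟨y, rfl⟩
  obtain ⟨z, hz⟩ := hS (n * k) (blockRingEquiv B n k (star y * y))
    ⟨blockRingEquiv B n k y, by rw [map_mul, blockRingEquiv_star]⟩
  refine ⟨(blockRingEquiv D n k).symm z, (blockRingEquiv D n k).injective ?_⟩
  rw [blockRingEquiv_map, hz, map_mul, blockRingEquiv_star, RingEquiv.apply_symm_apply]

variable [NonUnitalSemiring A] [StarRing A]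

theorem IsCPMap.comp {S : B → D} {T : A → B} (hS : IsCPMap S) (hT : IsCPMap T) :
    IsCPMap (S ∘ T) := by
  intro n x hx
  obtain ⟨z, hz⟩ := hT n x hx
  rw [← Matrix.map_map]
  exact hS n _ ⟨z, hz⟩

theorem isCPMap_diagonal {k : ℕ} {T : Fin k → A → B} (hT : ∀ i, IsCPMap (T i)) :
    IsCPMap (fun a => diagonal fun i => T i a) := by
  intro n x hx
  choose z hz using fun i => hT i n x hx
  refine ⟨of fun p q => diagonal fun i => z i p q, ?_⟩
  ext p q i j
  have hpq : ∀ i, T i (x p q) = ∑ r, star (z i r p) * z i r q := fun i => by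
    simpa [mul_apply] using congrFun₂ (hz i) p q
  rcases eq_or_ne i j with rfl | hij
  · simp [mul_apply, Matrix.sum_apply, star_eq_conjTranspose, diagonal_conjTranspose, hpq]
  · simp [mul_apply, Matrix.sum_apply, star_eq_conjTranspose, diagonal_conjTranspose, hij]

end Algebraic

section Bures
variable {A B D : Type*} [CStarAlgebra A] [CStarAlgebra B] [CStarAlgebra D]

theorem exists_isCPExtension {T₁ T₂ : A →ₗ[ℂ] B} (hT₁ : IsCPMap T₁) (hT₂ : IsCPMap T₂) :
    ∃ That, IsCPExtension T₁ T₂ That := by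
  refine ⟨(diagonalLinearMap (Fin 2) ℂ B).comp (LinearMap.pi ![T₁, T₂]), ?_, ?_, ?_⟩
  · exact isCPMap_diagonal (T := fun i => ![T₁, T₂] i) fun i => by fin_cases i <;> assumption
  all_goals intro a; simp

theorem IsCPExtension.map {T₁ T₂ : A → B} {That : A →ₗ[ℂ] Matrix (Fin 2) (Fin 2) B}
    (hThat : IsCPExtension T₁ T₂ That) {S : B →ₗ[ℂ] D} (hS : IsCPMap S) :
    IsCPExtension (fun a => S (T₁ a)) (fun a => S (T₂ a)) (S.mapMatrix.comp That) := by
  obtain ⟨hcp, h₁, h₂⟩ := hThat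
  exact ⟨(hS.matrixMap 2).comp hcp, fun a => by simp [h₁], fun a => by simp [h₂]⟩

theorem buresDist_le_sqrt_mul_of_forall {T₁ T₂ : A → B} {U₁ U₂ : A → D} {c : ℝ} (hc : 0 ≤ c)
    (hT : ∃ That, IsCPExtension T₁ T₂ That)
    (hU : ∀ That, IsCPExtension T₁ T₂ That → ∃ Uhat, IsCPExtension U₁ U₂ Uhat ∧
      ‖U₁ 1 + U₂ 1 - Uhat 1 0 1 - Uhat 1 1 0‖ ≤ c * ‖T₁ 1 + T₂ 1 - That 1 0 1 - That 1 1 0‖) :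
    buresDist U₁ U₂ ≤ √c * buresDist T₁ T₂ := by
  unfold buresDist
  rw [← Real.sqrt_mul hc, ← smul_eq_mul, ← Real.sInf_smul_of_nonneg hc]
  apply Real.sqrt_le_sqrt
  obtain ⟨That, hThat⟩ := hT
  refine le_csInf ?_ ?_
  · exact ⟨_, ⟨_, ⟨That, hThat, rfl⟩, rfl⟩⟩
  rintro _ ⟨_, ⟨That, hThat, rfl⟩, rfl⟩
  obtain ⟨Uhat, hUhat, hle⟩ := hU That hThat
  refine le_trans (csInf_le ?_ ?_) hle
  · exact ⟨0, by rintro _ ⟨_, _, rfl⟩; positivity⟩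
  · exact ⟨Uhat, hUhat, rfl⟩

end Bures

theorem stmt8 {A B D : Type*} [CStarAlgebra A] [CStarAlgebra B] [CStarAlgebra D]
    (T₁ T₂ : A →L[ℂ] B) (hT₁ : IsCPMap T₁) (hT₂ : IsCPMap T₂)
    (S : B →L[ℂ] D) (hS : IsCPMap S) :
    buresDist (fun a => S (T₁ a)) (fun a => S (T₂ a)) ≤
      Real.sqrt ‖S‖ * buresDist (⇑T₁) (⇑T₂) := by
  refine buresDist_le_sqrt_mul_of_forall (norm_nonneg S)
    (exists_isCPExtension (T₁ := T₁.toLinearMap) hT₁ hT₂) fun That hThat => ?_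
  refine ⟨_, hThat.map (S := S.toLinearMap) hS, ?_⟩
  calc _ = ‖S (T₁ 1 + T₂ 1 - That 1 0 1 - That 1 1 0)‖ := by simp
    _ ≤ ‖S‖ * ‖T₁ 1 + T₂ 1 - That 1 0 1 - That 1 1 0‖ := S.le_opNorm _
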